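/- arXiv:2409.02764 — 5 statements merged into one kernel-verified Lean document; each statement's English description precedes it below -/
import Mathlib

section
/- Let k₁ > 0, q₀ > 0, γ > 0 and m₀ > 0. Define m : ℝ → ℝ by m(t) = (−1 + k₁q₀m₀t + γm₀² + √(4γm₀² + (k₁tq₀m₀ + γm₀² − 1)²)) / (2γm₀). Then m(0) = m₀, m(t) > 0 for all t ≥ 0, and m is differentiable with m′(t) = k₁q₀ m(t)² / (1 + γ m(t)²) for all t ≥ 0. -/
/-!
Separating variables, `(1 + γ m²) / m² dm = k₁ q₀ dt` integrates to
`γ m - 1 / m = k₁ q₀ t + γ m₀ - 1 / m₀`. After multiplying by `m₀ m`, the given formula is the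
positive root of the resulting quadratic in `m`, and its derivative follows by differentiating the
inverse of `x ↦ γ m₀ x - m₀ / x`.
-/

noncomputable def posRoot (a b c : ℝ) : ℝ := (b + √(b ^ 2 + 4 * a * c)) / (2 * a)

section PosRoot

variable {a c : ℝ}

theorem sq_sqrt_discrim (ha : 0 < a) (hc : 0 < c) (b : ℝ) :
    √(b ^ 2 + 4 * a * c) ^ 2 = b ^ 2 + 4 * a * c :=
  Real.sq_sqrt (by positivity)

theorem posRoot_pos (ha : 0 < a) (hc : 0 < c) (b : ℝ) : 0 < posRoot a b c := by
  have hb : |b| < √(b ^ 2 + 4 * a * c) :=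
    abs_lt_of_sq_lt_sq (by rw [sq_sqrt_discrim ha hc]; nlinarith [mul_pos ha hc]) (Real.sqrt_nonneg _)
  exact div_pos (by linarith [neg_abs_le b]) (by positivity)

theorem posRoot_spec (ha : 0 < a) (hc : 0 < c) (b : ℝ) :
    a * posRoot a b c ^ 2 = b * posRoot a b c + c := by
  have hs := sq_sqrt_discrim ha hc b
  unfold posRoot
  set s := √(b ^ 2 + 4 * a * c)
  field_simp
  linear_combination hs

theorem eq_posRoot (ha : 0 < a) (hc : 0 < c) {b x : ℝ} (hx : 0 < x)
    (h : a * x ^ 2 = b * x + c) : x = posRoot a b c := by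
  set r := posRoot a b c
  have hr : 0 < r := posRoot_pos ha hc b
  have hfactor : (x - r) * (a * x * r + c) = 0 := by
    linear_combination r * h - x * posRoot_spec ha hc b
  have : a * x * r + c ≠ 0 := by positivity
  linarith [(mul_eq_zero.mp hfactor).resolve_right this]

/-- `posRoot a · c` inverts `x ↦ a x - c / x` on `(0, ∞)`, whose derivative is `a + c / x²`. -/
theorem hasDerivAt_posRoot (ha : 0 < a) (hc : 0 < c) (b : ℝ) :
    HasDerivAt (fun b => posRoot a b c)
      (posRoot a b c ^ 2 / (a * posRoot a b c ^ 2 + c)) b := by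
  set r := posRoot a b c
  have hr : 0 < r := posRoot_pos ha hc b
  have hcont : Continuous (fun b => posRoot a b c) := by unfold posRoot; fun_prop
  have hf : HasDerivAt (fun x => a * x - c * x⁻¹) (a + c / r ^ 2) r :=
    (((hasDerivAt_id' r).const_mul a).sub ((hasDerivAt_inv hr.ne').const_mul c)).congr_deriv
      (by field_simp; ring)
  have hinv : ∀ y, a * posRoot a y c - c * (posRoot a y c)⁻¹ = y := fun y => by
    have := (posRoot_pos ha hc y).ne'
    field_simp
    linear_combination posRoot_spec ha hc y
  exact (HasDerivAt.of_local_left_inverse hcont.continuousAt hf (by positivity)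
    (Filter.Eventually.of_forall hinv)).congr_deriv (by field_simp)

end PosRoot

theorem stmt0_general (k₁ q₀ γ m₀ : ℝ) (hγ : 0 < γ) (hm₀ : 0 < m₀)
    (m : ℝ → ℝ)
    (hm : m = fun t => (-1 + k₁*q₀*m₀*t + γ*m₀^2 +
      Real.sqrt (4*γ*m₀^2 + (k₁*t*q₀*m₀ + γ*m₀^2 - 1)^2)) / (2*γ*m₀)) :
    m 0 = m₀ ∧ (∀ t ≥ 0, 0 < m t) ∧
    (∀ t ≥ 0, HasDerivAt m (k₁*q₀*(m t)^2 / (1 + γ*(m t)^2)) t) := by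
  have ha : 0 < γ * m₀ := mul_pos hγ hm₀
  have hm_root : m = fun t => posRoot (γ * m₀) (k₁ * q₀ * m₀ * t + γ * m₀ ^ 2 - 1) m₀ := by
    rw [hm]; funext t; unfold posRoot; ring_nf
  have hlin (t : ℝ) :
      HasDerivAt (fun t => k₁ * q₀ * m₀ * t + γ * m₀ ^ 2 - 1) (k₁ * q₀ * m₀) t := by
    simpa using ((hasDerivAt_id t).const_mul (k₁ * q₀ * m₀)).add_const (γ * m₀ ^ 2 - 1)
  rw [hm_root]
  refine ⟨?_, fun t _ => posRoot_pos ha hm₀ _, fun t _ => ?_⟩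
  · exact (eq_posRoot ha hm₀ hm₀ (by ring)).symm
  · exact ((hasDerivAt_posRoot ha hm₀ _).comp t (hlin t)).congr_deriv (by field_simp; ring)

/-- Explicit solution of `m' = k₁ q₀ m² / (1 + γ m²)` on the invariant plane `s = 0`. -/
theorem stmt0 (k₁ q₀ γ m₀ : ℝ) (hk₁ : 0 < k₁) (hq₀ : 0 < q₀) (hγ : 0 < γ) (hm₀ : 0 < m₀)
    (m : ℝ → ℝ)
    (hm : m = fun t => (-1 + k₁*q₀*m₀*t + γ*m₀^2 +
      Real.sqrt (4*γ*m₀^2 + (k₁*t*q₀*m₀ + γ*m₀^2 - 1)^2)) / (2*γ*m₀)) :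
    m 0 = m₀ ∧ (∀ t ≥ 0, 0 < m t) ∧
    (∀ t ≥ 0, HasDerivAt m (k₁*q₀*(m t)^2 / (1 + γ*(m t)^2)) t) :=
  stmt0_general k₁ q₀ γ m₀ hγ hm₀ m hm
end

section
/- Let x, y > 0 satisfy y³ > 2x⁵ and 2x³ > y², and set b* = (−2x⁵ + y³)/(2x⁵) and K* = (2x³ − y²)/(x²y²), so b*, K* > 0. Then the Jacobian matrix at (x,y) of the vector field X(x,y) = (x²/((1+K*x²)y) + α − b*x, x² + αε − y) (for any constants α, ε) equals M = [[1, −1/(2x)], [2x, −1]]. Moreover M·M = 0 and M ≠ 0, i.e., M is a nonzero nilpotent matrix with double zero eigenvalue; its kernel is spanned by v₁ = (1/(2x), 1)ᵗ, and v₂ = (1, 2x−1)ᵗ satisfies M v₂ = v₁, so the zero eigenvalue has geometric multiplicity one. -/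
/-!
Writing the first component of the field as `g(x)/y` with `g(u) = u²/(1 + K u²)`, the Jacobian
at `(x, y)` is `[[g'(x)/y - b, -g(x)/y²], [2x, -1]]`, where `g'(x) = 2x/(1 + K x²)²`. At `K = K*` one
has `1 + K* x² = 2x³/y²`, and with `b = b*` this Jacobian becomes `M`. Since `tr M = det M = 0`,
Cayley–Hamilton gives `M² = 0`; the kernel of `M` is cut out by its first row `w₀ = w₁/(2x)`.
-/

noncomputable def autoinducerField (α ε b K : ℝ) (p : ℝ × ℝ) : ℝ × ℝ :=
  (p.1^2/((1+K*p.1^2)*p.2) + α - b*p.1, p.1^2 + α*ε - p.2)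

noncomputable def autoinducerJacobian (b K x y : ℝ) : Matrix (Fin 2) (Fin 2) ℝ :=
  !![2*x/((1+K*x^2)^2*y) - b, -x^2/((1+K*x^2)*y^2); 2*x, -1]

section Derivative

open ContinuousLinearMap

def Matrix.toProdCLM (M : Matrix (Fin 2) (Fin 2) ℝ) : ℝ × ℝ →L[ℝ] ℝ × ℝ :=
  (M 0 0 • fst ℝ ℝ ℝ + M 0 1 • snd ℝ ℝ ℝ).prod (M 1 0 • fst ℝ ℝ ℝ + M 1 1 • snd ℝ ℝ ℝ)

theorem Matrix.toProdCLM_apply (M : Matrix (Fin 2) (Fin 2) ℝ) (p : ℝ × ℝ) :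
    M.toProdCLM p = (M.mulVec ![p.1, p.2] 0, M.mulVec ![p.1, p.2] 1) := by
  simp [Matrix.toProdCLM, Matrix.mulVec, dotProduct, Fin.sum_univ_two]

theorem hasDerivAt_sq_div_one_add_mul_sq {K u : ℝ} (h : 1 + K*u^2 ≠ 0) :
    HasDerivAt (fun u => u^2/(1+K*u^2)) (2*u/(1+K*u^2)^2) u := by
  refine ((hasDerivAt_pow 2 u).div (((hasDerivAt_pow 2 u).const_mul K).const_add 1) h).congr_deriv ?_
  field_simp
  ring

theorem HasDerivAt.hasFDerivAt_comp_fst_div_snd {g : ℝ → ℝ} {g' x y : ℝ} (hg : HasDerivAt g g' x)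
    (hy : y ≠ 0) :
    HasFDerivAt (fun p : ℝ × ℝ => g p.1 / p.2)
      ((g'/y) • fst ℝ ℝ ℝ - (g x/y^2) • snd ℝ ℝ ℝ) (x, y) := by
  simp only [div_eq_mul_inv]
  refine ((hg.comp_hasFDerivAt (x, y) hasFDerivAt_fst).mul
    ((hasDerivAt_inv hy).comp_hasFDerivAt (x, y) (hasFDerivAt_snd (𝕜 := ℝ)))).congr_fderiv ?_
  ext <;> simp
  ring

theorem hasFDerivAt_autoinducerField (α ε b : ℝ) {K x y : ℝ} (hK : 1 + K*x^2 ≠ 0) (hy : y ≠ 0) :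
    HasFDerivAt (autoinducerField α ε b K) (autoinducerJacobian b K x y).toProdCLM (x, y) := by
  have hfrac := (hasDerivAt_sq_div_one_add_mul_sq hK).hasFDerivAt_comp_fst_div_snd hy
  have h1 := (hfrac.add_const α).sub (hasFDerivAt_fst.const_mul b)
  have h2 := ((hasDerivAt_pow 2 x).comp_hasFDerivAt (x, y) hasFDerivAt_fst |>.add_const (α*ε)).sub
    (hasFDerivAt_snd (𝕜 := ℝ))
  have hX : autoinducerField α ε b K =
      fun p => (p.1^2/(1+K*p.1^2)/p.2 + α - b*p.1, p.1^2 + α*ε - p.2) := by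
    funext p
    simp only [autoinducerField, div_div]
  rw [hX]
  refine (h1.prodMk h2).congr_fderiv ?_
  ext <;> simp [Matrix.toProdCLM, autoinducerJacobian] <;> field_simp

end Derivative

theorem Matrix.mul_self_eq_zero_of_trace_eq_zero_of_det_eq_zero {R : Type*} [CommRing R]
    [Nontrivial R] {M : Matrix (Fin 2) (Fin 2) R} (htr : M.trace = 0) (hdet : M.det = 0) :
    M * M = 0 := by
  have h := M.aeval_self_charpoly
  rw [charpoly_fin_two, htr, hdet] at h
  simpa [sq] using h

section BogdanovTakens

variable {x y : ℝ}

-- The solutions `b*`, `K*` of `tr J = det J = 0` for `J = autoinducerJacobian b K x y`.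
noncomputable def btB (x y : ℝ) : ℝ := (-2*x^5 + y^3)/(2*x^5)

noncomputable def btK (x y : ℝ) : ℝ := (2*x^3 - y^2)/(x^2*y^2)

noncomputable def btMatrix (x : ℝ) : Matrix (Fin 2) (Fin 2) ℝ := !![1, -1/(2*x); 2*x, -1]

theorem btB_pos (hx : 0 < x) (h : 2*x^5 < y^3) : 0 < btB x y :=
  div_pos (by linarith) (by positivity)

theorem btK_pos (hx : 0 < x) (hy : 0 < y) (h : y^2 < 2*x^3) : 0 < btK x y :=
  div_pos (by linarith) (by positivity)

theorem one_add_btK_mul_sq (hx : x ≠ 0) (hy : y ≠ 0) : 1 + btK x y * x^2 = 2*x^3/y^2 := by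
  rw [btK]
  field_simp
  ring

theorem autoinducerJacobian_btB_btK (hx : x ≠ 0) (hy : y ≠ 0) :
    autoinducerJacobian (btB x y) (btK x y) x y = btMatrix x := by
  rw [autoinducerJacobian, one_add_btK_mul_sq hx hy, btMatrix, btB]
  ext i j
  fin_cases i <;> fin_cases j <;> simp
  · field_simp
    ring
  · field_simp

theorem btMatrix_mul_self (hx : x ≠ 0) : btMatrix x * btMatrix x = 0 := by
  refine Matrix.mul_self_eq_zero_of_trace_eq_zero_of_det_eq_zero ?_ ?_
  · simp [btMatrix, Matrix.trace_fin_two]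
  · simp [btMatrix, Matrix.det_fin_two]
    field_simp
    ring

theorem btMatrix_ne_zero : btMatrix x ≠ 0 := fun h => by
  simpa [btMatrix] using congrFun (congrFun h 0) 0

theorem btMatrix_mulVec_eq_zero_iff (hx : x ≠ 0) {w : Fin 2 → ℝ} :
    (btMatrix x).mulVec w = 0 ↔ ∃ c : ℝ, w = c • ![1/(2*x), 1] := by
  constructor
  · intro hw
    have hrow : w 0 + -1 / (2*x) * w 1 = 0 := by
      simpa [btMatrix, Matrix.mulVec, dotProduct, Fin.sum_univ_two] using congrFun hw 0
    refine ⟨w 1, ?_⟩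
    ext i
    fin_cases i
    · simp
      linear_combination hrow
    · simp
  · rintro ⟨c, rfl⟩
    ext i
    fin_cases i <;> (simp [btMatrix, Matrix.mulVec, dotProduct, Fin.sum_univ_two]; field_simp; ring)

theorem btMatrix_mulVec_generalized_eigenvector (hx : x ≠ 0) :
    (btMatrix x).mulVec ![1, 2*x - 1] = ![1/(2*x), 1] := by
  ext i
  fin_cases i <;> simp [btMatrix, Matrix.mulVec, dotProduct, Fin.sum_univ_two]
  field_simp
  ring

end BogdanovTakens

/-- At the Bogdanov–Takens parameter values `b*`, `K*`, the Jacobian of `X` at `(x,y)`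
is the nonzero nilpotent matrix `M = [[1, −1/(2x)],[2x, −1]]` with double zero eigenvalue
of geometric multiplicity one. -/
theorem stmt13 (x y α ε : ℝ) (hx : 0 < x) (hy : 0 < y)
    (h1 : 2*x^5 < y^3) (h2 : y^2 < 2*x^3)
    (bs Ks : ℝ) (hbs : bs = (-2*x^5 + y^3)/(2*x^5)) (hKs : Ks = (2*x^3 - y^2)/(x^2*y^2))
    (X : ℝ × ℝ → ℝ × ℝ)
    (hX : X = fun p => (p.1^2/((1+Ks*p.1^2)*p.2) + α - bs*p.1, p.1^2 + α*ε - p.2))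
    (M : Matrix (Fin 2) (Fin 2) ℝ) (hM : M = !![1, -1/(2*x); 2*x, -1]) :
    0 < bs ∧ 0 < Ks ∧
    (∃ L : ℝ × ℝ →L[ℝ] ℝ × ℝ, HasFDerivAt X L (x, y) ∧
      ∀ p : ℝ × ℝ, L p = (M.mulVec ![p.1, p.2] 0, M.mulVec ![p.1, p.2] 1)) ∧
    M * M = 0 ∧ M ≠ 0 ∧
    M.mulVec ![1/(2*x), 1] = 0 ∧
    (∀ w : Fin 2 → ℝ, M.mulVec w = 0 → ∃ c : ℝ, w = c • ![1/(2*x), 1]) ∧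
    M.mulVec ![1, 2*x - 1] = ![1/(2*x), 1] := by
  replace hbs : bs = btB x y := hbs
  replace hKs : Ks = btK x y := hKs
  replace hM : M = btMatrix x := hM
  replace hX : X = autoinducerField α ε bs Ks := hX
  subst hbs hKs hM hX
  have hK : 1 + btK x y * x^2 ≠ 0 := by
    rw [one_add_btK_mul_sq hx.ne' hy.ne']
    positivity
  have hDX := hasFDerivAt_autoinducerField α ε (btB x y) hK hy.ne'
  rw [autoinducerJacobian_btB_btK hx.ne' hy.ne'] at hDX
  exact ⟨btB_pos hx h1, btK_pos hx hy h2, ⟨_, hDX, Matrix.toProdCLM_apply _⟩,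
    btMatrix_mul_self hx.ne', btMatrix_ne_zero,
    (btMatrix_mulVec_eq_zero_iff hx.ne').2 ⟨1, (one_smul _ _).symm⟩,
    fun _ => (btMatrix_mulVec_eq_zero_iff hx.ne').1,
    btMatrix_mulVec_generalized_eigenvector hx.ne'⟩
end

section
/- Let x, y > 0 with 2x⁵ + x³y − y³ ≠ 0, and define α(x,y) = (−2x⁵ + y³ − x³y)/(2x⁴) and ε(x,y) = 2x⁴(x² − y)/(2x⁵ + x³y − y³). Then the determinant of the Jacobian matrix of the map (x,y) ↦ (α(x,y), ε(x,y)), i.e. (∂α/∂x)(∂ε/∂y) − (∂α/∂y)(∂ε/∂x), equals (4x⁵ − x³y − 6x²y² + 4y³)/(x(2x⁵ + x³y − y³)). -/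
section BogdanovTakensJacobian

variable {x y : ℝ}

theorem hasDerivAt_alpha_fst (hx : x ≠ 0) :
    HasDerivAt (fun x' => (-2*x'^5 + y^3 - x'^3*y)/(2*x'^4))
      ((-2*x^5 + x^3*y - 4*y^3)/(2*x^5)) x := by
  have h := ((((hasDerivAt_pow 5 x).const_mul (-2)).add_const (y^3)).sub
    ((hasDerivAt_pow 3 x).mul_const y)).div ((hasDerivAt_pow 4 x).const_mul 2) (by positivity)
  refine h.congr_deriv ?_
  simp only [Pi.sub_apply]
  push_cast
  field_simp
  ring

theorem hasDerivAt_alpha_snd :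
    HasDerivAt (fun y' => (-2*x^5 + y'^3 - x^3*y')/(2*x^4)) ((3*y^2 - x^3)/(2*x^4)) y := by
  have h := (((hasDerivAt_pow 3 y).const_add (-2*x^5)).sub
    ((hasDerivAt_id y).const_mul (x^3))).div_const (2*x^4)
  refine h.congr_deriv ?_
  push_cast
  ring

theorem hasDerivAt_eps_fst (hden : 2*x^5 + x^3*y - y^3 ≠ 0) :
    HasDerivAt (fun x' => 2*x'^4*(x'^2 - y)/(2*x'^5 + x'^3*y - y^3))
      (2*x^3*(2*x^7 + 5*x^5*y - x^3*y^2 - 6*x^2*y^3 + 4*y^4)/(2*x^5 + x^3*y - y^3)^2) x := by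
  have h := (((hasDerivAt_pow 4 x).const_mul 2).mul ((hasDerivAt_pow 2 x).sub_const y)).div
    ((((hasDerivAt_pow 5 x).const_mul 2).add ((hasDerivAt_pow 3 x).mul_const y)).sub_const (y^3))
    hden
  refine h.congr_deriv ?_
  simp only [Pi.mul_apply, Pi.add_apply]
  push_cast
  ring

theorem hasDerivAt_eps_snd (hden : 2*x^5 + x^3*y - y^3 ≠ 0) :
    HasDerivAt (fun y' => 2*x^4*(x^2 - y')/(2*x^5 + x^3*y' - y'^3))
      (2*x^4*(-3*x^5 + 3*x^2*y^2 - 2*y^3)/(2*x^5 + x^3*y - y^3)^2) y := by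
  have h := (((hasDerivAt_id y).const_sub (x^2)).const_mul (2*x^4)).div
    ((((hasDerivAt_id y).const_mul (x^3)).const_add (2*x^5)).sub (hasDerivAt_pow 3 y)) hden
  refine h.congr_deriv ?_
  simp only [Pi.sub_apply, id]
  push_cast
  ring

theorem stmt16_general (x y : ℝ) (hx : 0 < x) (hden : 2*x^5 + x^3*y - y^3 ≠ 0)
    (α ε : ℝ → ℝ → ℝ)
    (hα : α = fun x y => (-2*x^5 + y^3 - x^3*y)/(2*x^4))
    (hε : ε = fun x y => 2*x^4*(x^2 - y)/(2*x^5 + x^3*y - y^3)) :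
    deriv (fun x' => α x' y) x * deriv (fun y' => ε x y') y -
      deriv (fun y' => α x y') y * deriv (fun x' => ε x' y) x =
    (4*x^5 - x^3*y - 6*x^2*y^2 + 4*y^3)/(x*(2*x^5 + x^3*y - y^3)) := by
  have hx0 := hx.ne'
  subst hα hε
  beta_reduce
  rw [(hasDerivAt_alpha_fst hx0).deriv, hasDerivAt_alpha_snd.deriv,
    (hasDerivAt_eps_fst hden).deriv, (hasDerivAt_eps_snd hden).deriv]
  rw [div_mul_div_comm, div_mul_div_comm, div_sub_div _ _ (by positivity) (by positivity),
    div_eq_div_iff (by positivity) (by positivity)]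
  ring

/-- The Jacobian determinant of the map `(x,y) ↦ (α(x,y), ε(x,y))` arising in the
Bogdanov–Takens construction. -/
theorem stmt16 (x y : ℝ) (hx : 0 < x) (hy : 0 < y) (hden : 2*x^5 + x^3*y - y^3 ≠ 0)
    (α ε : ℝ → ℝ → ℝ)
    (hα : α = fun x y => (-2*x^5 + y^3 - x^3*y)/(2*x^4))
    (hε : ε = fun x y => 2*x^4*(x^2 - y)/(2*x^5 + x^3*y - y^3)) :
    deriv (fun x' => α x' y) x * deriv (fun y' => ε x y') y -
      deriv (fun y' => α x y') y * deriv (fun x' => ε x' y) x =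
    (4*x^5 - x^3*y - 6*x^2*y^2 + 4*y^3)/(x*(2*x^5 + x^3*y - y^3)) :=
  stmt16_general x y hx hden α ε hα hε
end BogdanovTakensJacobian
end

section
/- Let x, y > 0 and define F(x,y,b,K) = −2Kx⁵ − 9xy + by² + 2bKx²y² + bK²x⁴y² + x³(10 + Ky). Then substituting b = b* := (−2x⁵ + y³)/(2x⁵) and K = K* := (2x³ − y²)/(x²y²) yields F(x,y,b*,K*) = −(2x/y²)·(4x⁵ − x³y − 6x²y² + 4y³). In particular, if 4x⁵ − x³y − 6x²y² + 4y³ ≠ 0 then F(x,y,b*,K*) ≠ 0. -/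
/-- The factor `F(x, y, b, K)` of `det DΨ`. -/
def transversalityFactor {𝕜 : Type*} [Field 𝕜] (x y b K : 𝕜) : 𝕜 :=
  -2*K*x^5 - 9*x*y + b*y^2 + 2*b*K*x^2*y^2 + b*K^2*x^4*y^2 + x^3*(10 + K*y)

theorem transversalityFactor_bogdanovTakens {𝕜 : Type*} [Field 𝕜] [NeZero (2 : 𝕜)]
    {x y : 𝕜} (hx : x ≠ 0) (hy : y ≠ 0) :
    transversalityFactor x y ((-2*x^5 + y^3)/(2*x^5)) ((2*x^3 - y^2)/(x^2*y^2)) =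
      -(2*x/y^2) * (4*x^5 - x^3*y - 6*x^2*y^2 + 4*y^3) := by
  unfold transversalityFactor
  field_simp
  ring

/-- Evaluation of `F` at the Bogdanov–Takens parameter values `b*`, `K*`. -/
theorem stmt18 (x y : ℝ) (hx : 0 < x) (hy : 0 < y)
    (F : ℝ → ℝ → ℝ → ℝ → ℝ)
    (hF : F = fun x y b K =>
      -2*K*x^5 - 9*x*y + b*y^2 + 2*b*K*x^2*y^2 + b*K^2*x^4*y^2 + x^3*(10 + K*y))
    (bs Ks : ℝ)
    (hbs : bs = (-2*x^5 + y^3)/(2*x^5)) (hKs : Ks = (2*x^3 - y^2)/(x^2*y^2)) :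
    F x y bs Ks = -(2*x/y^2) * (4*x^5 - x^3*y - 6*x^2*y^2 + 4*y^3) ∧
    (4*x^5 - x^3*y - 6*x^2*y^2 + 4*y^3 ≠ 0 → F x y bs Ks ≠ 0) := by
  have hEval : F x y bs Ks = -(2*x/y^2) * (4*x^5 - x^3*y - 6*x^2*y^2 + 4*y^3) := by
    subst hF hbs hKs
    exact transversalityFactor_bogdanovTakens hx.ne' hy.ne'
  refine ⟨hEval, fun hne => ?_⟩
  rw [hEval]
  exact mul_ne_zero (neg_ne_zero.mpr (by positivity)) hne
end

section
/- Let U, V > 0 and define a₂₀ = (1/(4U¹⁰V))·(8U¹⁰ − 16U¹¹ + 4U⁹V − 4U⁵V³ + 8U⁶V³ − 3U³V⁴ + 6U⁴V⁴ + 2V⁶ − 4UV⁶) and b₁₁ = (1/(2U⁹V))·(−4U⁹ + 8U¹⁰ − 2U⁸V + U⁴V³) − (1/(2U⁹V))·(4U⁵V³ + 3U³V⁴ − 2V⁶). Then a₂₀ + b₁₁ = −V²·(2U⁵ + 3U³V − 2V³)/(4U¹⁰). In particular, if G₂ := 2U⁵ + 3U³V − 2V³ ≠ 0 then a₂₀ +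 b₁₁ ≠ 0. -/
/-- The genericity quantity of the Bogdanov–Takens normal form:
`a₂₀ + b₁₁ = −V²(2U⁵ + 3U³V − 2V³)/(4U¹⁰)`. -/
theorem stmt19 (U V : ℝ) (hU : 0 < U) (hV : 0 < V)
    (a20 b11 : ℝ)
    (ha20 : a20 = (1/(4*U^10*V)) *
      (8*U^10 - 16*U^11 + 4*U^9*V - 4*U^5*V^3 + 8*U^6*V^3 - 3*U^3*V^4 + 6*U^4*V^4
        + 2*V^6 - 4*U*V^6))
    (hb11 : b11 = (1/(2*U^9*V)) * (-4*U^9 + 8*U^10 - 2*U^8*V + U^4*V^3)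
      - (1/(2*U^9*V)) * (4*U^5*V^3 + 3*U^3*V^4 - 2*V^6)) :
    a20 + b11 = -V^2 * (2*U^5 + 3*U^3*V - 2*V^3)/(4*U^10) ∧
    (2*U^5 + 3*U^3*V - 2*V^3 ≠ 0 → a20 + b11 ≠ 0) := by
  have sum_eq : a20 + b11 = -V^2 * (2*U^5 + 3*U^3*V - 2*V^3)/(4*U^10) := by
    subst ha20 hb11
    field_simp
    ring
  refine ⟨sum_eq, fun hG => ?_⟩
  rw [sum_eq]
  exact div_ne_zero (mul_ne_zero (neg_ne_zero.mpr (pow_ne_zero 2 hV.ne')) hG) (by positivity)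
end
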